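/- arXiv:1310.4283 — 2 statements merged into one kernel-verified Lean document; each statement's English description precedes it below -/
import Mathlib

section
/- Iteration induction: if p ⊑ q + a;p then p ⊑ a*;q, where a* is the greatest fixed point of p ↦ 1 + a;p. -/
/-- Iteration induction: if p ⊑ q + a;p then p ⊑ a*;q. -/
theorem iter_induction {A : Type*} (a : Set A → Set A) (ha : Monotone a)
    (astar : Set A → Set A) (hm : Monotone astar)
    (hfix : ∀ X, astar X = X ∩ a (astar X))
    (hgreatest : ∀ r : Set A → Set A, Monotone r →
      (∀ X, r X ⊆ X ∩ a (r X)) → ∀ X, r X ⊆ astar X)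
    (p q : Set A → Set A) (hp : Monotone p) (hq : Monotone q)
    (h : ∀ X, p X ⊆ q X ∩ a (p X)) :
    ∀ X, p X ⊆ astar (q X) := by
  set r : Set A → Set A := fun Y => ⋃ (X : Set A) (_ : q X ⊆ Y), p X with hr
  have hrmono : Monotone r := by
    intro Y Z hYZ
    refine Set.iUnion_mono fun X => Set.iUnion_subset fun hXY => ?_
    exact Set.subset_iUnion_of_subset (hXY.trans hYZ) subset_rfl
  have hrstep : ∀ Y, r Y ⊆ Y ∩ a (r Y) := by
    intro Y x hx
    simp only [hr, Set.mem_iUnion] at hx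
    obtain ⟨X, hXY, hxp⟩ := hx
    have hpx := h X hxp
    refine ⟨hXY hpx.1, ?_⟩
    have hsub : p X ⊆ r Y := fun y hy => Set.mem_iUnion.2 ⟨X, Set.mem_iUnion.2 ⟨hXY, hy⟩⟩
    exact ha hsub hpx.2
  intro X x hx
  exact hgreatest r hrmono hrstep (q X)
    (Set.mem_iUnion.2 ⟨X, Set.mem_iUnion.2 ⟨subset_rfl, hx⟩⟩)
end

section
/- Soundness of abstract interpretation is a data refinement: given γ : S♯ → P(S), a monotone predicate transformer p : P(S) → P(S), and p♯ : S♯ → S♯, the refinement (p♯)^{-1} ⊑_{⟨γ⟩} p (i.e. ⟨γ⟩;(p♯)^{-1} ⊑ p;⟨γ⟩, equivalently (p♯)^{-1};[γ] ⊑ [γ];p) holds if and only if for all s♯ ∈ S♯, γ(s♯) ⊆ p(γ(p♯(s♯))). -/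
/-- Soundness of forward abstract interpretation as a data refinement:
    ⟨γ⟩;(p♯)⁻¹ ⊑ p;⟨γ⟩ iff ∀ s♯, γ(s♯) ⊆ p(γ(p♯(s♯))). -/
theorem ai_soundness_refinement {S Sharp : Type*}
    (γ : Sharp → Set S) (p : Set S → Set S) (hp : Monotone p)
    (psharp : Sharp → Sharp) :
    (∀ X : Set Sharp, (⋃ s ∈ psharp ⁻¹' X, γ s) ⊆ p (⋃ s ∈ X, γ s))
      ↔ (∀ s : Sharp, γ s ⊆ p (γ (psharp s))) := by
  refine ⟨fun h s => ?_, fun h X => ?_⟩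
  · have h_singleton := h {psharp s}
    rw [Set.biUnion_singleton] at h_singleton
    exact (Set.subset_biUnion_of_mem (u := γ) (show s ∈ psharp ⁻¹' {psharp s} from rfl)).trans
      h_singleton
  · exact Set.iUnion₂_subset fun s hs => (h s).trans (hp (Set.subset_biUnion_of_mem hs))
end
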